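/- arXiv:math/0607317 — 2 statements merged into one kernel-verified Lean document; each statement's English description precedes it below -/
import Mathlib

section
/- Let (R, m, k) be a commutative noetherian local ring, and assume either that R is m-adically complete or that the residue field k is an uncountable set. Let I be an ideal of R and let {p_i}_{i ∈ ℕ} be a countable family of prime ideals of R. If I is not contained in p_i for any i ∈ ℕ, then I is not contained in the union ⋃_{i ∈ ℕ} p_i. -/
/-!
If the residue field is uncountable, induct on a finite generating set of `I`: replacing two
generators `a, b` by `a + r * b` for lifts `r` of residue classes gives uncountably many smaller
generating sets, each inside some `p i`; two lifts with distinct residues land in the same `p i`,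
and since their difference is a unit, that `p i` contains `a` and `b`.

If `R` is `m`-adically complete, build `x n ∈ I` and strictly increasing exponents `c n` with
`x (n + 1) ≡ x n [m ^ c n]` and `x n ∉ p j ⊔ m ^ c n` for `j < n`: finite prime avoidance moves
`x n` off `p n` by an element of `m ^ c n * I`, and Krull's intersection theorem (every ideal is
`m`-adically closed) then provides `c (n + 1)`. The limit lies in `I` and in no `p j`.
-/

open IsLocalRing Filter

universe u

section

variable {R : Type*} [CommRing R]

theorem Ideal.exists_add_notMem_of_not_le {ι : Type*} {q J : Ideal R} [hq : q.IsPrime]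
    (hJ : ¬ J ≤ q) (s : Finset ι) (p : ι → Ideal R) {x : R} (hx : ∀ j ∈ s, x ∉ p j) :
    ∃ y ∈ J, x + y ∉ q ∧ ∀ j ∈ s, x + y ∉ p j := by
  classical
  by_cases hxq : x ∈ q
  swap
  · exact ⟨0, zero_mem J, by simpa using hxq, by simpa using hx⟩
  set S := s.filter fun j ↦ ¬ p j ≤ q
  have hJS : ¬ J * ∏ j ∈ S, p j ≤ q := by
    rw [hq.mul_le, hq.prod_le]
    rintro (hJq | ⟨j, hj, hjq⟩)
    · exact hJ hJq
    · exact (Finset.mem_filter.1 hj).2 hjq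
  obtain ⟨y, hy, hyq⟩ := SetLike.not_le_iff_exists.1 hJS
  have hxyq : x + y ∉ q := fun h ↦ hyq (by simpa using q.sub_mem h hxq)
  refine ⟨y, mul_le_left hy, hxyq, fun j hj hxy ↦ ?_⟩
  by_cases hjq : p j ≤ q
  · exact hxyq (hjq hxy)
  · have hyj : y ∈ p j :=
      (prod_le_inf.trans (Finset.inf_le (Finset.mem_filter.2 ⟨hj, hjq⟩))) (mul_le_right hy)
    exact hx j hj (by simpa using (p j).sub_mem hxy hyj)

theorem IsPrecomplete.exists_sub_mem_of_succ_sub_mem {M : Type*} [AddCommGroup M] [Module R M]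
    {I : Ideal R} [IsPrecomplete I M] {f : ℕ → M} {c : ℕ → ℕ} (hc : StrictMono c)
    (hf : ∀ n, f (n + 1) - f n ∈ (I ^ c n • ⊤ : Submodule R M)) :
    ∃ L, ∀ n, L - f n ∈ (I ^ c n • ⊤ : Submodule R M) := by
  have tail {m n : ℕ} (hmn : m ≤ n) : f n - f m ∈ (I ^ c m • ⊤ : Submodule R M) := by
    induction n, hmn using Nat.le_induction with
    | base => simp
    | succ n hmn ih =>
      rw [← sub_add_sub_cancel (f (n + 1)) (f n)]
      exact add_mem (Submodule.smul_mono_left (Ideal.pow_le_pow_right (hc.monotone hmn)) (hf n)) ih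
  obtain ⟨L, hL⟩ := IsPrecomplete.prec ‹_› fun {m n} hmn ↦ (SModEq.sub_mem.2 <|
    Submodule.smul_mono_left (Ideal.pow_le_pow_right (hc.id_le m)) (tail hmn)).symm
  refine ⟨L, fun n ↦ ?_⟩
  rw [← sub_add_sub_cancel L (f (c n))]
  exact add_mem (SModEq.sub_mem.1 (hL (c n)).symm) (tail (hc.id_le n))

theorem Ideal.eventually_notMem_sup_pow [IsNoetherianRing R] [IsLocalRing R] {𝔞 J : Ideal R}
    (h𝔞 : 𝔞 ≠ ⊤) {x : R} (hx : x ∉ J) : ∀ᶠ n in atTop, x ∉ J ⊔ 𝔞 ^ n := by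
  have := IsHausdorff.of_isLocalRing 𝔞 (R ⧸ J) h𝔞
  obtain ⟨n, hn⟩ : ∃ n, ¬ (Ideal.Quotient.mk J x ≡ 0 [SMOD (𝔞 ^ n • ⊤ : Submodule R (R ⧸ J))]) := by
    by_contra! h
    exact hx (Ideal.Quotient.eq_zero_iff_mem.1 (this.haus _ h))
  refine eventually_atTop.2 ⟨n, fun k hk hxk ↦ hn ?_⟩
  obtain ⟨j, hj, a, ha, rfl⟩ := Submodule.mem_sup.1 (sup_le_sup_left (pow_le_pow_right hk) J hxk)
  rw [SModEq.zero, smul_top_eq_map, Submodule.restrictScalars_mem, map_add,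
    Ideal.Quotient.eq_zero_iff_mem.2 hj, zero_add]
  exact mem_map_of_mem _ ha

theorem IsLocalRing.exists_seq_notMem_sup_pow [IsNoetherianRing R] [IsLocalRing R]
    {I : Ideal R} (hI_top : I ≠ ⊤) {p : ℕ → Ideal R} (hp : ∀ i, (p i).IsPrime)
    (hI : ∀ i, ¬ I ≤ p i) :
    ∃ (x : ℕ → R) (c : ℕ → ℕ), StrictMono c ∧ (∀ n, x n ∈ I) ∧
      (∀ n, x (n + 1) - x n ∈ maximalIdeal R ^ c n) ∧
      ∀ n, ∀ j < n, x n ∉ p j ⊔ maximalIdeal R ^ c n := by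
  set m := maximalIdeal R
  let Good (n : ℕ) (s : R × ℕ) : Prop := s.1 ∈ I ∧ ∀ j < n, s.1 ∉ p j ⊔ m ^ s.2
  have step : ∀ n (s : R × ℕ), Good n s →
      ∃ s' : R × ℕ, Good (n + 1) s' ∧ s'.1 - s.1 ∈ m ^ s.2 ∧ s.2 < s'.2 := by
    rintro n ⟨x, c⟩ ⟨hxI, hx⟩
    have := hp n
    have hJ : ¬ m ^ c * I ≤ p n := by
      rw [(hp n).mul_le]
      rintro (hmc | hIn)
      · exact hI n ((le_maximalIdeal hI_top).trans (Ideal.IsPrime.le_of_pow_le hmc))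
      · exact hI n hIn
    obtain ⟨y, hy, hyn, hyj⟩ := Ideal.exists_add_notMem_of_not_le hJ (Finset.range n)
      (fun j ↦ p j ⊔ m ^ c) (by simpa using hx)
    obtain ⟨c', hc', hcc'⟩ := ((Ideal.eventually_notMem_sup_pow
      (maximalIdeal.isMaximal R).ne_top hyn).and (eventually_gt_atTop c)).exists
    refine ⟨(x + y, c'), ⟨add_mem hxI (Ideal.mul_le_right hy), fun j hj ↦ ?_⟩,
      by simpa using Ideal.mul_le_left hy, hcc'⟩
    rcases Nat.lt_succ_iff_lt_or_eq.1 hj with hj | rfl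
    · have hle : p j ⊔ m ^ c' ≤ p j ⊔ m ^ c := sup_le_sup_left (Ideal.pow_le_pow_right hcc'.le) _
      exact fun h ↦ hyj j (Finset.mem_range.2 hj) (hle h)
    · exact hc'
  choose! next hnext using step
  let g (n : ℕ) : R × ℕ := Nat.rec (0, 0) next n
  have hg (n : ℕ) : Good n (g n) := by
    induction n with
    | zero => exact ⟨zero_mem I, by simp⟩
    | succ n ih => exact (hnext n _ ih).1
  exact ⟨fun n ↦ (g n).1, fun n ↦ (g n).2,
    strictMono_nat_of_lt_succ fun n ↦ (hnext n _ (hg n)).2.2, fun n ↦ (hg n).1,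
    fun n ↦ (hnext n _ (hg n)).2.1, fun n ↦ (hg n).2⟩

theorem IsLocalRing.exists_mem_forall_notMem_of_isAdicComplete [IsNoetherianRing R]
    [IsLocalRing R] [IsAdicComplete (maximalIdeal R) R] {I : Ideal R} {p : ℕ → Ideal R}
    (hp : ∀ i, (p i).IsPrime) (hI : ∀ i, ¬ I ≤ p i) : ∃ x ∈ I, ∀ i, x ∉ p i := by
  rcases eq_or_ne I ⊤ with rfl | hI_top
  · exact ⟨1, Submodule.mem_top, fun i ↦ (p i).one_notMem⟩
  have hm : maximalIdeal R ≠ ⊤ := (maximalIdeal.isMaximal R).ne_top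
  obtain ⟨x, c, hc, hxI, hx, hxp⟩ := exists_seq_notMem_sup_pow hI_top hp hI
  obtain ⟨L, hL⟩ := IsPrecomplete.exists_sub_mem_of_succ_sub_mem (I := maximalIdeal R) (f := x) hc
    fun n ↦ by simpa [smul_eq_mul, Ideal.mul_top] using hx n
  simp only [smul_eq_mul, Ideal.mul_top] at hL
  refine ⟨L, ?_, fun i hi ↦ hxp (i + 1) i (lt_add_one i) ?_⟩
  · by_contra hLI
    obtain ⟨n, hn⟩ := (hc.tendsto_atTop.eventually (Ideal.eventually_notMem_sup_pow hm hLI)).exists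
    exact hn (by simpa using Submodule.add_mem_sup (hxI n) (hL n))
  · have := Submodule.sub_mem_sup hi (hL (i + 1))
    rwa [sub_sub_cancel] at this

theorem IsLocalRing.exists_insert_subset_of_forall_add_mul [IsLocalRing R]
    [Uncountable (ResidueField R)] {ι : Type*} [Countable ι] (p : ι → Ideal R) (s : Set R)
    (a b : R) (H : ∀ r : R, ∃ i, insert (a + r * b) s ⊆ p i) :
    ∃ i, insert a (insert b s) ⊆ p i := by
  choose f hf using H
  let lift := Function.surjInv (residue_surjective (R := R))
  obtain ⟨κ₁, κ₂, hf₁₂, hκ⟩ := Function.not_injective_iff.1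
    fun hinj : (f ∘ lift).Injective ↦ not_countable hinj.countable
  have hu : IsUnit (lift κ₁ - lift κ₂) := by
    have hlift (κ : ResidueField R) : residue R (lift κ) = κ := Function.surjInv_eq _ κ
    rwa [← notMem_maximalIdeal, ← residue_eq_zero_iff, map_sub, hlift, hlift, sub_eq_zero]
  obtain ⟨h₁, hs⟩ := Set.insert_subset_iff.1 (hf (lift κ₁))
  have h₂ : a + lift κ₂ * b ∈ p (f (lift κ₁)) := by
    rw [show f (lift κ₁) = f (lift κ₂) from hf₁₂]
    exact (Set.insert_subset_iff.1 (hf (lift κ₂))).1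
  have hb : b ∈ p (f (lift κ₁)) := by
    rw [← Ideal.unit_mul_mem_iff_mem _ hu]
    simpa [sub_mul] using Ideal.sub_mem _ h₁ h₂
  have ha : a ∈ p (f (lift κ₁)) := by
    simpa using Ideal.sub_mem _ h₁ (Ideal.mul_mem_left _ (lift κ₁) hb)
  exact ⟨f (lift κ₁), Set.insert_subset ha (Set.insert_subset hb hs)⟩

theorem IsLocalRing.exists_le_of_subset_iUnion_of_fg [IsLocalRing R]
    [Uncountable (ResidueField R)] {ι : Type*} [Countable ι] {p : ι → Ideal R} {I : Ideal R}
    (hI : I.FG) (hIp : (I : Set R) ⊆ ⋃ i, p i) : ∃ i, I ≤ p i := by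
  classical
  obtain ⟨s, rfl⟩ := hI
  suffices ∀ (t : Finset R) (a : R), (Ideal.span (insert a ↑t) : Set R) ⊆ ⋃ i, p i →
      ∃ i, insert a (t : Set R) ⊆ p i by
    obtain ⟨i, hi⟩ := this s 0 (by rwa [Ideal.span_insert_zero])
    exact ⟨i, Submodule.span_le.2 ((Set.subset_insert _ _).trans hi)⟩
  intro t
  induction t using Finset.induction_on with
  | empty =>
    intro a ha
    obtain ⟨i, hi⟩ := Set.mem_iUnion.1 (ha (Ideal.subset_span (Set.mem_insert a _)))
    exact ⟨i, by simpa using hi⟩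
  | insert b t _ ih =>
    intro a ha
    rw [Finset.coe_insert] at ha ⊢
    refine exists_insert_subset_of_forall_add_mul p _ a b fun r ↦ ih _ (subset_trans ?_ ha)
    refine Ideal.span_le.2 (Set.insert_subset ?_ (Ideal.subset_span.trans (Ideal.span_mono ?_)))
    · exact add_mem (Ideal.subset_span (by simp))
        (Ideal.mul_mem_left _ _ (Ideal.subset_span (by simp)))
    · exact (Set.subset_insert _ _).trans (Set.subset_insert _ _)

end

/-- **Countable prime avoidance.**  Let `(R, m, k)` be a noetherian local ring which is
`m`-adically complete or has uncountable residue field.  If an ideal `I` is not contained in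
any member of a countable family of primes, then `I` is not contained in their union. -/
theorem countable_prime_avoidance (R : Type u) [CommRing R] [IsNoetherianRing R] [IsLocalRing R]
    (hR : IsAdicComplete (maximalIdeal R) R ∨ Uncountable (ResidueField R))
    (I : Ideal R) (p : ℕ → Ideal R) (hp : ∀ i, (p i).IsPrime)
    (h : ∀ i, ¬ I ≤ p i) :
    ¬ (I : Set R) ⊆ ⋃ i : ℕ, (p i : Set R) := by
  intro hIp
  rcases hR with hR | hR
  · obtain ⟨x, hxI, hx⟩ := exists_mem_forall_notMem_of_isAdicComplete hp h
    obtain ⟨i, hi⟩ := Set.mem_iUnion.1 (hIp hxI)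
    exact hx i hi
  · obtain ⟨i, hi⟩ := exists_le_of_subset_iUnion_of_fg (IsNoetherian.noetherian I) hIp
    exact h i hi
end

section
/- Let R be a commutative noetherian ring, M a finitely generated R-module, and x ∈ R an element that is a nonzerodivisor on M. Let F be a finitely generated free R-module with a surjection π : F → M/xM and set N = ker π. Then there exists a short exact sequence of R-modules 0 → N → M ⊕ F → M → 0. -/
universe u

/-- Let `x ∈ R` be a nonzerodivisor on a finitely generated module `M` over a noetherian
ring `R`, let `π : F → M/xM` be a surjection from a finitely generated free module and
`N = ker π`.  Then there is a short exact sequence `0 → N → M ⊕ F → M → 0`. -/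
theorem exists_ses_ker_to_prod (R : Type u) [CommRing R] [IsNoetherianRing R]
    (M F : Type u) [AddCommGroup M] [Module R M] [Module.Finite R M]
    [AddCommGroup F] [Module R F] [Module.Free R F] [Module.Finite R F]
    (x : R) (hx : IsSMulRegular M x)
    (π : F →ₗ[R] M ⧸ (Ideal.span {x} • (⊤ : Submodule R M)))
    (hπ : Function.Surjective π) :
    ∃ (f : LinearMap.ker π →ₗ[R] M × F) (g : M × F →ₗ[R] M),
      Function.Injective f ∧ Function.Exact f g ∧ Function.Surjective g := by
  classical
  -- lift π through the quotient map, using projectivity of F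
  obtain ⟨φ, hφ⟩ := Module.projective_lifting_property
    (Ideal.span {x} • (⊤ : Submodule R M)).mkQ π (Submodule.mkQ_surjective _)
  -- multiplication by x as a linear map
  set L : M →ₗ[R] M := LinearMap.lsmul R M x with hL
  have hLinj : Function.Injective L := hx
  have hmemI : ∀ m : M, m ∈ Ideal.span {x} • (⊤ : Submodule R M) ↔ ∃ m' : M, x • m' = m := by
    intro m
    rw [Submodule.ideal_span_singleton_smul, ← SetLike.mem_coe,
      Submodule.coe_pointwise_smul, Set.mem_smul_set]
    constructor
    · rintro ⟨m', -, h'⟩; exact ⟨m', h'⟩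
    · rintro ⟨m', rfl⟩; exact ⟨m', trivial, rfl⟩
  -- for n in ker π, φ n lies in the range of L
  have hker : ∀ n : LinearMap.ker π, φ (n : F) ∈ LinearMap.range L := by
    rintro ⟨n, hn⟩
    have h1 : (Ideal.span {x} • (⊤ : Submodule R M)).mkQ (φ n) = 0 := by
      rw [← LinearMap.comp_apply, hφ]; exact hn
    have h2 : φ n ∈ Ideal.span {x} • (⊤ : Submodule R M) := by
      rwa [Submodule.mkQ_apply, Submodule.Quotient.mk_eq_zero] at h1
    obtain ⟨m', hm'⟩ := (hmemI _).1 h2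
    exact ⟨m', hm'⟩
  let e : M ≃ₗ[R] LinearMap.range L := LinearEquiv.ofInjective L hLinj
  let c : LinearMap.ker π →ₗ[R] LinearMap.range L :=
    (φ ∘ₗ (LinearMap.ker π).subtype).codRestrict _ hker
  let ψ : LinearMap.ker π →ₗ[R] M := e.symm.toLinearMap ∘ₗ c
  have hψ : ∀ n : LinearMap.ker π, x • ψ n = φ (n : F) := by
    intro n
    exact congrArg Subtype.val (e.apply_symm_apply (c n))
  refine ⟨LinearMap.prod (-ψ) (LinearMap.ker π).subtype,
    L ∘ₗ LinearMap.fst R M F + φ ∘ₗ LinearMap.snd R M F, ?_, ?_, ?_⟩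
  · intro a b hab
    exact Subtype.ext (congrArg Prod.snd hab)
  · rw [LinearMap.exact_iff]
    ext ⟨m, u⟩
    simp only [LinearMap.mem_ker, LinearMap.add_apply, LinearMap.comp_apply,
      LinearMap.fst_apply, LinearMap.snd_apply, LinearMap.mem_range]
    constructor
    · intro h
      have h2 : x • m + φ u = 0 := by simpa [hL] using h
      have hu : u ∈ LinearMap.ker π := by
        have hφu : φ u = x • (-m) := by
          rw [smul_neg]; exact eq_neg_of_add_eq_zero_right h2
        have : (Ideal.span {x} • (⊤ : Submodule R M)).mkQ (φ u) = 0 := by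
          rw [hφu, Submodule.mkQ_apply, Submodule.Quotient.mk_eq_zero]
          exact (hmemI _).2 ⟨-m, rfl⟩
        rw [LinearMap.mem_ker, ← hφ]; exact this
      refine ⟨⟨u, hu⟩, ?_⟩
      have h3 : x • (-m) = x • ψ ⟨u, hu⟩ := by
        rw [hψ ⟨u, hu⟩, smul_neg]
        exact (eq_neg_of_add_eq_zero_right h2).symm
      have h4 : (-m) = ψ ⟨u, hu⟩ := hx h3
      simp [LinearMap.prod_apply, ← h4]
    · rintro ⟨n, hn⟩
      have h1 : m = -ψ n := (congrArg Prod.fst hn).symm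
      have h2 : u = (n : F) := (congrArg Prod.snd hn).symm
      rw [h1, h2]
      simp [hL, smul_neg, hψ n]
  · intro m
    obtain ⟨u, hu⟩ := hπ ((Ideal.span {x} • (⊤ : Submodule R M)).mkQ m)
    have hmem : m - φ u ∈ Ideal.span {x} • (⊤ : Submodule R M) := by
      rw [← Submodule.Quotient.mk_eq_zero, ← Submodule.mkQ_apply, map_sub,
        ← LinearMap.comp_apply, hφ, hu, sub_self]
    obtain ⟨m', hm'⟩ := (hmemI _).1 hmem
    refine ⟨(m', u), ?_⟩
    simp only [LinearMap.add_apply, LinearMap.comp_apply, LinearMap.fst_apply,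
      LinearMap.snd_apply, hL, LinearMap.lsmul_apply, hm']
    abel
end
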